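/- The Gaussian curvature of the Riemannian metric g = cosh(r) dr² + (sinh²(r)/cosh(r)) dθ² on the (r,θ) half-plane r > 0 equals G(r,θ) = 1/cosh³(r), which is positive and bounded by 1. -/

import Mathlib

open Real

/-- Gaussian curvature of the diagonal metric `E dr² + G dθ²` with `E, G` depending
only on `r`, given by the classical formula `K = -(1/√(EG)) ∂_r((∂_r √G)/√E)`. -/
noncomputable def gaussCurvature (E G : ℝ → ℝ) (r : ℝ) : ℝ :=
  -(1 / Real.sqrt (E r * G r)) *
    deriv (fun s => deriv (fun u => Real.sqrt (G u)) s / Real.sqrt (E s)) r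

open Filter Topology

/-! For `r > 0` one has `√G = sinh r / √(cosh r)`, and `(√G)' / √E` simplifies, via
`cosh² - sinh² = 1`, to `(1 + cosh⁻²)/2`. Its derivative is `-sinh / cosh³`, and dividing by
`√(EG) = sinh` gives the curvature `1 / cosh³`. -/

lemma gaussCurvature_eq_of_eventuallyEq {E G f : ℝ → ℝ} {r f' : ℝ}
    (hf : (fun s => deriv (fun u => √(G u)) s / √(E s)) =ᶠ[𝓝 r] f) (hf' : HasDerivAt f f' r) :
    gaussCurvature E G r = -f' / √(E r * G r) := by
  rw [gaussCurvature, hf.deriv_eq, hf'.deriv]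
  ring

lemma sqrt_sinh_sq_div_cosh {x : ℝ} (hx : 0 ≤ x) : √(sinh x ^ 2 / cosh x) = sinh x / √(cosh x) := by
  rw [sqrt_div (sq_nonneg _), sqrt_sq (sinh_nonneg_iff.mpr hx)]

lemma hasDerivAt_sinh_div_sqrt_cosh (x : ℝ) :
    HasDerivAt (fun s => sinh s / √(cosh s))
      ((1 + cosh x ^ 2) / (2 * cosh x * √(cosh x))) x := by
  have hc : 0 < cosh x := cosh_pos x
  have hsc : 0 < √(cosh x) := sqrt_pos.mpr hc
  have hsqrt := (hasDerivAt_cosh x).sqrt hc.ne'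
  refine ((hasDerivAt_sinh x).div hsqrt hsc.ne').congr_deriv ?_
  field_simp
  linear_combination cosh x * cosh_sq_sub_sinh_sq x + (cosh x ^ 2 - 1) * sq_sqrt hc.le

lemma deriv_sqrt_sinh_sq_div_cosh_div_sqrt_cosh {x : ℝ} (hx : 0 < x) :
    deriv (fun u => √(sinh u ^ 2 / cosh u)) x / √(cosh x) = (1 + (cosh x ^ 2)⁻¹) / 2 := by
  have hsqrtG : (fun u => √(sinh u ^ 2 / cosh u)) =ᶠ[𝓝 x] fun u => sinh u / √(cosh u) := by
    filter_upwards [Ioi_mem_nhds hx] with u hu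
    exact sqrt_sinh_sq_div_cosh hu.le
  have hc : 0 < cosh x := cosh_pos x
  rw [hsqrtG.deriv_eq, (hasDerivAt_sinh_div_sqrt_cosh x).deriv]
  field_simp
  rw [sq_sqrt hc.le]
  ring

lemma hasDerivAt_one_add_inv_cosh_sq_div_two (x : ℝ) :
    HasDerivAt (fun s => (1 + (cosh s ^ 2)⁻¹) / 2) (-sinh x / cosh x ^ 3) x := by
  have hc : cosh x ≠ 0 := (cosh_pos x).ne'
  have hinv := ((hasDerivAt_cosh x).fun_pow 2).inv (pow_ne_zero 2 hc)
  refine ((hinv.const_add 1).div_const 2).congr_deriv ?_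
  field_simp
  ring

theorem stmt_7 (r : ℝ) (hr : 0 < r) :
    gaussCurvature (fun s => Real.cosh s) (fun s => (Real.sinh s) ^ 2 / Real.cosh s) r
        = 1 / (Real.cosh r) ^ 3 ∧
      0 < (1 : ℝ) / (Real.cosh r) ^ 3 ∧ (1 : ℝ) / (Real.cosh r) ^ 3 ≤ 1 := by
  have hc : 0 < cosh r := cosh_pos r
  have hs : 0 < sinh r := sinh_pos_iff.mpr hr
  have hinner : (fun s => deriv (fun u => √(sinh u ^ 2 / cosh u)) s / √(cosh s))
      =ᶠ[𝓝 r] fun s => (1 + (cosh s ^ 2)⁻¹) / 2 := by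
    filter_upwards [Ioi_mem_nhds hr] with s hs_pos
    exact deriv_sqrt_sinh_sq_div_cosh_div_sqrt_cosh hs_pos
  have hsqrtEG : √(cosh r * (sinh r ^ 2 / cosh r)) = sinh r := by
    rw [mul_div_cancel₀ _ hc.ne', sqrt_sq hs.le]
  refine ⟨?_, by positivity, (div_le_one (by positivity)).mpr (one_le_pow₀ (one_le_cosh r))⟩
  rw [gaussCurvature_eq_of_eventuallyEq hinner (hasDerivAt_one_add_inv_cosh_sq_div_two r), hsqrtEG]
  field_simp
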